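/- arXiv:0709.2675 — 9 statements merged into one kernel-verified Lean document; each statement's English description precedes it below -/
import Mathlib

section
/- For every integer N ≥ 2, the trace of the square of the quantized alternating Hilbert matrix A_N^quant equals -(sin(π/N))²·(N-1)N(N+1)/3. -/
/-!
Let `ζ` be a primitive `N`-th root of unity and `S x = ∑_{j<N} j xʲ`. For every `x ≠ 1` with
`xᴺ = 1` one has `(x - 1) S x = N`, so `1 / ((1 - ζᵏ)(1 - ζ⁻ᵏ)) = S(ζᵏ) S(ζ⁻ᵏ) / N²` for
`0 < k < N`. Summing over `k` and applying Parseval's identity for the discrete Fourier transform of `j ↦ j`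
gives `∑_{0<k<N} 1 / |1 - ζᵏ|² = (N ∑ j² - (∑ j)²) / N² = (N² - 1) / 12`, that is
`∑_{0<k<N} csc²(πk/N) = (N² - 1) / 3`. Finally `A m n * A n m = -sin²(π/N) csc²(π(m - n)/N)`
depends only on `m - n` modulo `N`, so `tr (A²)` is `N` times `-sin²(π/N)` times that sum.
-/

open Finset Real

section RootsOfUnity

variable {K : Type*}

theorem sum_range_natCast_mul_two [CommRing K] (n : ℕ) :
    (∑ j ∈ range n, (j : K)) * 2 = n * (n - 1) := by
  induction n with
  | zero => simp
  | succ n ih => rw [sum_range_succ, add_mul, ih]; push_cast; ring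

theorem sum_range_natCast_sq_mul_six [CommRing K] (n : ℕ) :
    (∑ j ∈ range n, (j : K) ^ 2) * 6 = n * (n - 1) * (2 * n - 1) := by
  induction n with
  | zero => simp
  | succ n ih => rw [sum_range_succ, add_mul, ih]; push_cast; ring

theorem sub_one_mul_sum_range_natCast_mul_pow [CommRing K] (x : K) (n : ℕ) :
    (x - 1) * ∑ j ∈ range n, (j : K) * x ^ j = (n - 1) * x ^ n - ∑ j ∈ range n, x ^ j + 1 := by
  induction n with
  | zero => simp
  | succ n ih => rw [sum_range_succ, sum_range_succ, mul_add, ih]; push_cast; ring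

variable [Field K]

theorem geom_sum_eq_zero_of_pow_eq_one {x : K} {n : ℕ} (hxn : x ^ n = 1) (hx : x ≠ 1) :
    ∑ i ∈ range n, x ^ i = 0 := by
  rw [geom_sum_eq hx, hxn, sub_self, zero_div]

theorem sub_one_mul_sum_range_natCast_mul_pow_of_pow_eq_one {x : K} {n : ℕ} (hxn : x ^ n = 1)
    (hx : x ≠ 1) : (x - 1) * ∑ j ∈ range n, (j : K) * x ^ j = n := by
  rw [sub_one_mul_sum_range_natCast_mul_pow, geom_sum_eq_zero_of_pow_eq_one hxn hx, hxn]
  ring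

theorem one_sub_mul_one_sub_inv_mul_sum_mul_sum {x : K} {n : ℕ} (hxn : x ^ n = 1) (hx : x ≠ 1) :
    (1 - x) * (1 - x⁻¹) * ((∑ j ∈ range n, (j : K) * x ^ j) * ∑ j ∈ range n, (j : K) * x⁻¹ ^ j) =
      n ^ 2 := by
  linear_combination ((x⁻¹ - 1) * ∑ j ∈ range n, (j : K) * x⁻¹ ^ j) *
      sub_one_mul_sum_range_natCast_mul_pow_of_pow_eq_one hxn hx +
    n * sub_one_mul_sum_range_natCast_mul_pow_of_pow_eq_one (x := x⁻¹)
      (by rw [inv_pow, hxn, inv_one]) (inv_ne_one.mpr hx)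

namespace IsPrimitiveRoot

variable {ζ : K} {N : ℕ}

theorem sum_range_pow_div_pow_pow (hζ : IsPrimitiveRoot ζ N) {i j : ℕ} (hi : i < N)
    (hj : j < N) : ∑ k ∈ range N, (ζ ^ i / ζ ^ j) ^ k = if i = j then (N : K) else 0 := by
  have hζj : ζ ^ j ≠ 0 := pow_ne_zero _ (hζ.ne_zero (by omega))
  split_ifs with hij
  · simp [hij, div_self hζj]
  · apply geom_sum_eq_zero_of_pow_eq_one
    · rw [div_pow, ← pow_mul, ← pow_mul, mul_comm i, mul_comm j, pow_mul, pow_mul,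
        hζ.pow_eq_one, one_pow, one_pow, div_one]
    · rw [Ne, div_eq_one_iff_eq hζj]
      exact fun h => hij (hζ.pow_inj hi hj h)

theorem sum_range_mul_sum_range_inv (hζ : IsPrimitiveRoot ζ N) (f g : ℕ → K) :
    ∑ k ∈ range N, (∑ j ∈ range N, f j * (ζ ^ k) ^ j) * (∑ j ∈ range N, g j * ((ζ ^ k)⁻¹) ^ j) =
      N * ∑ j ∈ range N, f j * g j := by
  have hterm : ∀ k i j : ℕ, f i * (ζ ^ k) ^ i * (g j * ((ζ ^ k)⁻¹) ^ j) =
      f i * g j * (ζ ^ i / ζ ^ j) ^ k := by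
    intro k i j
    rw [div_pow, ← pow_mul, ← pow_mul, inv_pow, ← pow_mul, mul_comm k i, mul_comm k j]
    ring
  simp_rw [sum_mul_sum, hterm]
  rw [sum_comm]
  refine (sum_congr rfl fun i hi => ?_).trans (mul_sum _ _ _).symm
  rw [sum_comm, sum_congr rfl fun j hj => by
    rw [← mul_sum, hζ.sum_range_pow_div_pow_pow (mem_range.mp hi) (mem_range.mp hj), mul_ite,
      mul_zero]]
  rw [sum_ite_eq, if_pos hi]
  ring

theorem sum_Ico_inv_one_sub_pow_mul_one_sub_inv_pow [CharZero K] (hζ : IsPrimitiveRoot ζ N)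
    (hN : 0 < N) :
    ∑ k ∈ Ico 1 N, ((1 - ζ ^ k) * (1 - (ζ ^ k)⁻¹))⁻¹ = ((N : K) ^ 2 - 1) / 12 := by
  have hN2 : (N : K) ^ 2 ≠ 0 := pow_ne_zero 2 (Nat.cast_ne_zero.mpr hN.ne')
  have hterm : ∀ k ∈ Ico 1 N, ((1 - ζ ^ k) * (1 - (ζ ^ k)⁻¹))⁻¹ =
      (∑ j ∈ range N, (j : K) * (ζ ^ k) ^ j) * (∑ j ∈ range N, (j : K) * (ζ ^ k)⁻¹ ^ j) /
        N ^ 2 := by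
    intro k hk
    have hprod := one_sub_mul_one_sub_inv_mul_sum_mul_sum
      (by rw [pow_right_comm, hζ.pow_eq_one, one_pow])
      (hζ.pow_ne_one_of_pos_of_lt (Nat.one_le_iff_ne_zero.mp (mem_Ico.mp hk).1) (mem_Ico.mp hk).2)
    rw [eq_div_iff hN2, ← hprod, ← mul_assoc,
      inv_mul_cancel₀ (left_ne_zero_of_mul (hprod ▸ hN2)), one_mul]
  have hparseval := hζ.sum_range_mul_sum_range_inv (fun j => (j : K)) (fun j => (j : K))
  rw [sum_range_eq_add_Ico _ hN] at hparseval
  simp only [pow_zero, inv_one, one_pow, mul_one, ← sq] at hparseval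
  rw [sum_congr rfl hterm, ← sum_div, div_eq_iff hN2]
  linear_combination hparseval + (N / 6 : K) * sum_range_natCast_sq_mul_six (K := K) N -
    ((2 * ∑ j ∈ range N, (j : K) + N * (N - 1)) / 4) * sum_range_natCast_mul_two (K := K) N

end IsPrimitiveRoot

end RootsOfUnity

theorem Complex.one_sub_exp_mul_I_mul_one_sub_inv (θ : ℂ) :
    (1 - Complex.exp (θ * Complex.I)) * (1 - (Complex.exp (θ * Complex.I))⁻¹) =
      4 * Complex.sin (θ / 2) ^ 2 := by
  have hprod : Complex.exp (θ * Complex.I) * Complex.exp (-θ * Complex.I) = 1 := by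
    rw [← Complex.exp_add, neg_mul, add_neg_cancel, Complex.exp_zero]
  have hcos := Complex.cos_two_mul (θ / 2)
  rw [mul_div_cancel₀ _ two_ne_zero] at hcos
  rw [← Complex.exp_neg, ← neg_mul]
  linear_combination hprod + Complex.two_cos θ - 2 * hcos - 4 * Complex.sin_sq_add_cos_sq (θ / 2)

theorem Real.sum_Ico_inv_sin_sq_pi_mul_div {N : ℕ} (hN : 0 < N) :
    ∑ k ∈ Ico 1 N, (sin (π * k / N) ^ 2)⁻¹ = ((N : ℝ) ^ 2 - 1) / 3 := by
  have key := (Complex.isPrimitiveRoot_exp N hN.ne').sum_Ico_inv_one_sub_pow_mul_one_sub_inv_pow hN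
  have hterm : ∀ k : ℕ, (1 - Complex.exp (2 * π * Complex.I / N) ^ k) *
      (1 - (Complex.exp (2 * π * Complex.I / N) ^ k)⁻¹) = ((4 * sin (π * k / N) ^ 2 : ℝ) : ℂ) := by
    intro k
    rw [← Complex.exp_nat_mul,
      show k * (2 * π * Complex.I / N) = (2 * π * k / N) * Complex.I by ring,
      Complex.one_sub_exp_mul_I_mul_one_sub_inv]
    push_cast
    ring_nf
  simp_rw [hterm] at key
  have hreal : ∑ k ∈ Ico 1 N, (4 * sin (π * k / N) ^ 2)⁻¹ = ((N : ℝ) ^ 2 - 1) / 12 := by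
    exact_mod_cast key
  simp_rw [mul_inv, ← mul_sum] at hreal
  linarith

theorem sin_sq_pi_mul_sub_div_eq_fin_sub {N : ℕ} (m n : Fin N) :
    sin (π * ((m : ℝ) - (n : ℝ)) / N) ^ 2 = sin (π * ((m - n : Fin N) : ℕ) / N) ^ 2 := by
  rcases le_or_gt n m with h | h
  · rw [Fin.coe_sub_iff_le.mpr h, Nat.cast_sub h]
  · have hN : (N : ℝ) ≠ 0 := by have := m.pos; positivity
    rw [Fin.coe_sub_iff_lt.mpr h, Nat.cast_sub (by omega), Nat.cast_add,
      show π * (N + m - n) / N = π * ((m : ℝ) - n) / N + π by field_simp; ring, sin_add_pi, neg_sq]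

theorem trace_sq_quant_alternating_hilbert (N : ℕ) (hN : 2 ≤ N)
    (A : Matrix (Fin N) (Fin N) ℝ)
    (hA : ∀ m n : Fin N, A m n =
      if m = n then 0 else Real.sin (π / N) / Real.sin (π * ((m : ℝ) - (n : ℝ)) / N)) :
    Matrix.trace (A * A) =
      -(Real.sin (π / N)) ^ 2 * (((N : ℝ) - 1) * N * ((N : ℝ) + 1) / 3) := by
  have : NeZero N := ⟨by omega⟩
  set s := sin (π / N)
  have hprod : ∀ m n : Fin N,
      A m n * A n m = -s ^ 2 * (sin (π * ((m - n : Fin N) : ℕ) / N) ^ 2)⁻¹ := by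
    intro m n
    rw [← sin_sq_pi_mul_sub_div_eq_fin_sub, hA, hA]
    rcases eq_or_ne m n with rfl | h
    -- the right side vanishes too, as `sin 0 = 0` and `0⁻¹ = 0`
    · simp
    · rw [if_neg h, if_neg h.symm, show π * ((n : ℝ) - m) / N = -(π * ((m : ℝ) - n) / N) by ring,
        sin_neg]
      ring
  calc Matrix.trace (A * A) = ∑ m, ∑ n, A m n * A n m := rfl
    _ = ∑ m : Fin N, ∑ d : Fin N, -s ^ 2 * (sin (π * (d : ℕ) / N) ^ 2)⁻¹ := by
      refine sum_congr rfl fun m _ => ?_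
      simp_rw [hprod]
      exact Fintype.sum_equiv (Equiv.subLeft m) _ _ fun _ => rfl
    _ = N * (-s ^ 2 * ∑ k ∈ range N, (sin (π * k / N) ^ 2)⁻¹) := by
      rw [sum_const, card_univ, Fintype.card_fin, nsmul_eq_mul, ← mul_sum,
        Fin.sum_univ_eq_sum_range (fun k => (sin (π * k / N) ^ 2)⁻¹)]
    _ = -s ^ 2 * (((N : ℝ) - 1) * N * ((N : ℝ) + 1) / 3) := by
      rw [sum_range_eq_add_Ico _ (by omega), Real.sum_Ico_inv_sin_sq_pi_mul_div (by omega)]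
      simp only [CharP.cast_eq_zero, mul_zero, zero_div, sin_zero]
      ring
end

section
/- For every integer N ≥ 2, ∑_{k=1}^{N-1} 1/sin²(πk/N) = (N²-1)/3. -/
open Finset Real

section Aux
open Complex

lemma sumId (n : ℕ) : ∑ j ∈ range n, (j : ℂ) = n * (n - 1) / 2 := by
  induction n with
  | zero => simp
  | succ m ih => rw [Finset.sum_range_succ, ih]; push_cast; ring

lemma sumSq (n : ℕ) : ∑ j ∈ range n, (j : ℂ) ^ 2 = n * (n - 1) * (2 * n - 1) / 6 := by
  induction n with
  | zero => simp
  | succ m ih => rw [Finset.sum_range_succ, ih]; push_cast; ring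

lemma key1 {N : ℕ} {z : ℂ} (hz : z ≠ 1) (hzN : z ^ N = 1) :
    (1 - z) * ∑ j ∈ range N, (j : ℂ) * z ^ j = -N := by
  have hg : ∑ j ∈ range N, z ^ j = 0 := by
    rw [geom_sum_eq hz, hzN]; simp
  have tele : ∑ j ∈ range N, ((j : ℂ) * z ^ j - ((j : ℂ) + 1) * z ^ (j + 1))
      = (0 : ℂ) * z ^ 0 - (N : ℂ) * z ^ N := by
    have := Finset.sum_range_sub' (fun j => (j : ℂ) * z ^ j) N
    simpa [push_cast] using this
  have h1 : (1 - z) * ∑ j ∈ range N, (j : ℂ) * z ^ j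
      = ∑ j ∈ range N, (((j : ℂ) * z ^ j - ((j : ℂ) + 1) * z ^ (j + 1)) + z * z ^ j) := by
    rw [Finset.mul_sum]; apply Finset.sum_congr rfl; intro j _; ring
  rw [h1, Finset.sum_add_distrib, tele, ← Finset.mul_sum, hg, hzN]
  ring

lemma zpow_ne_one {N m : ℕ} (hN : 1 ≤ N) (hm : ¬ N ∣ m) :
    Complex.exp (2 * π * Complex.I / N) ^ m ≠ 1 := by
  rw [← Complex.exp_nat_mul, Ne, Complex.exp_eq_one_iff]
  rintro ⟨n, hn⟩
  have hNne : (N : ℂ) ≠ 0 := Nat.cast_ne_zero.2 (by omega)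
  have hpi : (2 * π * Complex.I) ≠ 0 := by
    simp [Real.pi_ne_zero, Complex.I_ne_zero, Complex.ext_iff, Real.pi_ne_zero]
  have : (m : ℂ) = n * N := by
    field_simp at hn
    have h2 : (m : ℂ) * (2 * π * Complex.I) = (n * N) * (2 * π * Complex.I) := by
      rw [hn]; ring
    exact mul_right_cancel₀ hpi h2
  have hz : (m : ℤ) = n * N := by exact_mod_cast this
  have : (N : ℤ) ∣ (m : ℤ) := ⟨n, by linarith⟩
  exact hm (by exact_mod_cast this)

lemma zpow_root {N m : ℕ} (hN : 1 ≤ N) :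
    (Complex.exp (2 * π * Complex.I / N) ^ m) ^ N = 1 := by
  rw [← Complex.exp_nat_mul, ← Complex.exp_nat_mul]
  have hNne : (N : ℂ) ≠ 0 := Nat.cast_ne_zero.2 (by omega)
  have : (N : ℂ) * ((m : ℂ) * (2 * π * Complex.I / N)) = m * (2 * π * Complex.I) := by
    field_simp
  rw [this]
  simpa using Complex.exp_int_mul_two_pi_mul_I m

lemma orth {N : ℕ} (hN : 1 ≤ N) (m : ℕ) :
    ∑ k ∈ range N, (Complex.exp (2 * π * Complex.I / N) ^ m) ^ k
      = if N ∣ m then (N : ℂ) else 0 := by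
  by_cases h : N ∣ m
  · obtain ⟨c, rfl⟩ := h
    have : Complex.exp (2 * π * Complex.I / N) ^ (N * c) = 1 := by
      rw [pow_mul]; rw [show (Complex.exp (2 * π * Complex.I / N) ^ N) = 1 by
        simpa using zpow_root (m := 1) hN]
      simp
    simp [this]
  · rw [geom_sum_eq (zpow_ne_one hN h), zpow_root hN]
    simp [h]

lemma term_eq {N k : ℕ} (hN : 2 ≤ N) (hk1 : 1 ≤ k) (hk2 : k ≤ N - 1) :
    ((1 / Real.sin (π * k / N) ^ 2 : ℝ) : ℂ)
      = -4 * Complex.exp (2 * π * Complex.I / N) ^ k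
          / (1 - Complex.exp (2 * π * Complex.I / N) ^ k) ^ 2 := by
  have hNR : (0 : ℝ) < N := by positivity
  have hx1 : 0 < π * k / N := by
    have : (0:ℝ) < k := by exact_mod_cast hk1
    positivity
  have hx2 : π * k / N < π := by
    rw [div_lt_iff₀ hNR]
    have hkN : (k : ℝ) < N := by exact_mod_cast (by omega : k < N)
    nlinarith [Real.pi_pos]
  have hsin : Real.sin (π * k / N) ≠ 0 :=
    ne_of_gt (Real.sin_pos_of_pos_of_lt_pi hx1 hx2)
  set x : ℝ := π * k / N with hxdef
  set a : ℂ := Complex.exp (x * Complex.I) with hadef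
  have ha0 : a ≠ 0 := Complex.exp_ne_zero _
  have hNC : (N : ℂ) ≠ 0 := Nat.cast_ne_zero.2 (by omega)
  have hz : Complex.exp (2 * π * Complex.I / N) ^ k = a ^ 2 := by
    rw [hadef, ← Complex.exp_nat_mul, ← Complex.exp_nat_mul]
    congr 1
    push_cast [hxdef]
    field_simp
  have hsin2 : (Complex.sin x) ^ 2 = -(a⁻¹ - a) ^ 2 / 4 := by
    rw [Complex.sin, hadef, ← Complex.exp_neg]
    rw [show -(x : ℂ) * Complex.I = -((x:ℂ) * Complex.I) by ring]
    field_simp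
    ring_nf
    simp [Complex.I_sq]
    ring
  have key : (1 - a ^ 2) ^ 2 = -4 * a ^ 2 * (Complex.sin x) ^ 2 := by
    rw [hsin2]; field_simp
  have hsC : Complex.sin x ≠ 0 := by
    rw [← Complex.ofReal_sin]
    exact_mod_cast Complex.ofReal_ne_zero.2 hsin
  have h1z : 1 - a ^ 2 ≠ 0 := by
    intro h
    rw [h] at key
    have : a ^ 2 * Complex.sin x ^ 2 ≠ 0 := by
      exact mul_ne_zero (pow_ne_zero _ ha0) (pow_ne_zero _ hsC)
    apply this
    have := key.symm
    linear_combination (-1/4 : ℂ) * this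
  rw [hz]
  push_cast
  rw [← Complex.ofReal_sin]
  push_cast
  field_simp
  linear_combination key



lemma sumT {N : ℕ} (hN : 2 ≤ N) :
    ∑ k ∈ Icc 1 (N - 1),
        Complex.exp (2 * π * Complex.I / N) ^ k
          / (1 - Complex.exp (2 * π * Complex.I / N) ^ k) ^ 2
      = -((N : ℂ) ^ 2 - 1) / 12 := by
  have hN1 : 1 ≤ N := by omega
  have hNC : (N : ℂ) ≠ 0 := Nat.cast_ne_zero.2 (by omega)
  set z : ℂ := Complex.exp (2 * π * Complex.I / N) with hzdef
  set S : ℕ → ℂ := fun k => ∑ j ∈ range N, (j : ℂ) * (z ^ k) ^ j with hSdef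
  -- step 1 : termwise formula
  have step1 : ∀ k ∈ Icc 1 (N - 1),
      z ^ k / (1 - z ^ k) ^ 2 = S k ^ 2 / (N : ℂ) ^ 2 + S k / N := by
    intro k hk
    rw [Finset.mem_Icc] at hk
    have hkdvd : ¬ N ∣ k := by
      intro h
      rcases h with ⟨c, rfl⟩
      rcases c with _ | c
      · omega
      · have := Nat.mul_le_mul_left N (show 1 ≤ c + 1 by omega)
        omega
    have hz1 : z ^ k ≠ 1 := zpow_ne_one hN1 hkdvd
    have hkey := key1 hz1 (zpow_root (m := k) hN1)
    have hu : 1 - z ^ k ≠ 0 := by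
      intro h
      rw [h, zero_mul] at hkey
      exact hNC (by simpa using hkey.symm)
    have hS : S k = -N / (1 - z ^ k) := by
      rw [eq_div_iff hu]
      rw [hSdef]
      linear_combination hkey
    rw [hS]
    field_simp
    ring
  rw [Finset.sum_congr rfl step1, Finset.sum_add_distrib, ← Finset.sum_div, ← Finset.sum_div]
  -- Icc 1 (N-1) = (range N).erase 0
  have hIcc : Finset.Icc 1 (N - 1) = (Finset.range N).erase 0 := by
    ext j
    simp only [Finset.mem_Icc, Finset.mem_erase, Finset.mem_range]
    omega
  have hA : ∑ k ∈ range N, S k = 0 := by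
    rw [hSdef]
    simp only []
    rw [Finset.sum_comm]
    apply Finset.sum_eq_zero
    intro j hj
    rw [Finset.mem_range] at hj
    have hco : ∀ k, (j : ℂ) * (z ^ k) ^ j = (j : ℂ) * (z ^ j) ^ k := by
      intro k; rw [← pow_mul, ← pow_mul, Nat.mul_comm]
    simp_rw [hco]
    rw [← Finset.mul_sum, orth hN1 j]
    rcases Nat.eq_zero_or_pos j with rfl | hjpos
    · simp
    · rw [if_neg (by intro h; exact absurd (Nat.le_of_dvd hjpos h) (by omega)), mul_zero]
  have hB : ∑ k ∈ range N, S k ^ 2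
      = (N : ℂ) ^ 2 * ((N : ℂ) ^ 2 - 1) / 6 := by
    have expand : ∀ k, S k ^ 2 = ∑ j ∈ range N, ∑ l ∈ range N,
        (j : ℂ) * (l : ℂ) * (z ^ (j + l)) ^ k := by
      intro k
      rw [hSdef]
      simp only []
      rw [sq, Finset.sum_mul_sum]
      apply Finset.sum_congr rfl; intro j _
      apply Finset.sum_congr rfl; intro l _
      rw [← pow_mul, ← pow_mul, ← pow_mul,
        show (j + l) * k = k * j + k * l by ring, pow_add]
      ring
    simp_rw [expand]
    rw [Finset.sum_comm]
    have swap2 : ∀ j ∈ range N, ∑ k ∈ range N, ∑ l ∈ range N,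
          (j : ℂ) * (l : ℂ) * (z ^ (j + l)) ^ k
        = (j : ℂ) * ((N : ℂ) - (j : ℂ)) * (N : ℂ) := by
      intro j hj
      rw [Finset.mem_range] at hj
      rw [Finset.sum_comm]
      have inner : ∀ l ∈ range N, ∑ k ∈ range N, (j : ℂ) * (l : ℂ) * (z ^ (j + l)) ^ k
          = (j : ℂ) * (l : ℂ) * (if N ∣ (j + l) then (N : ℂ) else 0) := by
        intro l _
        rw [← Finset.mul_sum, orth hN1 (j + l)]
      rw [Finset.sum_congr rfl inner]
      rcases Nat.eq_zero_or_pos j with rfl | hjpos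
      · simp
      · rw [Finset.sum_eq_single_of_mem (N - j) (Finset.mem_range.2 (by omega))]
        · rw [if_pos ⟨1, by omega⟩]
          push_cast [Nat.cast_sub (le_of_lt hj)]
          ring
        · intro l hl hlne
          rw [Finset.mem_range] at hl
          rw [if_neg, mul_zero]
          rintro ⟨c, hc⟩
          have hc1 : c ≤ 1 := by
            by_contra hcc
            push_neg at hcc
            have := Nat.mul_le_mul_left N (show 2 ≤ c by omega)
            omega
          interval_cases c <;> omega
    rw [Finset.sum_congr rfl swap2]
    have : ∑ j ∈ range N, (j : ℂ) * ((N : ℂ) - (j : ℂ)) * (N : ℂ)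
        = (N : ℂ) * (N : ℂ) * (∑ j ∈ range N, (j : ℂ))
          - (N : ℂ) * (∑ j ∈ range N, (j : ℂ) ^ 2) := by
      rw [Finset.mul_sum, Finset.mul_sum, ← Finset.sum_sub_distrib]
      apply Finset.sum_congr rfl; intros; ring
    rw [this, sumId, sumSq]
    field_simp
    ring
  have hS0 : S 0 = (N : ℂ) * ((N : ℂ) - 1) / 2 := by
    rw [hSdef]
    simp only [pow_zero, one_pow, mul_one]
    exact sumId N
  have hAi : ∑ k ∈ Icc 1 (N - 1), S k = -((N : ℂ) * ((N : ℂ) - 1) / 2) := by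
    rw [hIcc]
    have := Finset.add_sum_erase (Finset.range N) S (a := 0) (Finset.mem_range.2 (by omega : 0 < N))
    rw [hA] at this
    rw [← hS0]
    linear_combination this
  have hBi : ∑ k ∈ Icc 1 (N - 1), S k ^ 2
      = (N : ℂ) ^ 2 * ((N : ℂ) ^ 2 - 1) / 6 - ((N : ℂ) * ((N : ℂ) - 1) / 2) ^ 2 := by
    rw [hIcc]
    have := Finset.add_sum_erase (Finset.range N) (fun k => S k ^ 2) (a := 0) (Finset.mem_range.2 (by omega : 0 < N))
    rw [hB] at this
    rw [← hS0]
    linear_combination this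
  rw [hAi, hBi]
  field_simp
  ring

end Aux

theorem sum_inv_sin_sq (N : ℕ) (hN : 2 ≤ N) :
    ∑ k ∈ Finset.Icc 1 (N - 1), 1 / (Real.sin (π * k / N)) ^ 2 = ((N : ℝ) ^ 2 - 1) / 3 := by
  apply Complex.ofReal_injective
  rw [Complex.ofReal_sum]
  have h1 : ∀ k ∈ Finset.Icc 1 (N - 1),
      ((1 / Real.sin (π * k / N) ^ 2 : ℝ) : ℂ)
        = -4 * (Complex.exp (2 * π * Complex.I / N) ^ k
            / (1 - Complex.exp (2 * π * Complex.I / N) ^ k) ^ 2) := by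
    intro k hk
    rw [Finset.mem_Icc] at hk
    rw [term_eq hN hk.1 hk.2, mul_div_assoc]
  rw [Finset.sum_congr rfl h1, ← Finset.mul_sum, sumT hN]
  push_cast
  ring
end

section
/- For 0 ≤ θ ≤ π/2, the limit as N → ∞ of trace(A_N(θ)²)/N equals -(π²/3 + θ² - πθ). -/
open Matrix Finset Real Filter

/-!
`A_N(θ)` is the Toeplitz matrix of the odd symbol `a k = cos (k θ) / k`, so
`trace (A_N²) = -∑_{m,n<N} a (m - n)²`. Grouping the terms by `|m - n|` turns
`trace (A_N²) / N` into `-2` times the Cesàro mean of the partial sums of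
`∑_{k ≥ 1} cos² (k θ) / k²`, and `cos² = (1 + cos 2·) / 2` together with the Fourier
series of the Bernoulli polynomial `B₂` evaluates that series to
`π² / 6 - π θ / 2 + θ² / 2`.
-/

open Polynomial in
theorem Polynomial.bernoulli_two : Polynomial.bernoulli 2 = X ^ 2 - X + C 6⁻¹ := by
  simp only [Polynomial.bernoulli, sum_range_succ, sum_range_zero, _root_.bernoulli_two,
    _root_.bernoulli_one, _root_.bernoulli_zero, ← C_mul_X_pow_eq_monomial]
  norm_num [map_neg]
  ring

theorem hasSum_one_div_nat_sq_mul_cos {x : ℝ} (hx : x ∈ Set.Icc 0 (2 * π)) :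
    HasSum (fun n : ℕ => 1 / (n : ℝ) ^ 2 * cos (n * x))
      (π ^ 2 / 6 - π * x / 2 + x ^ 2 / 4) := by
  have hx' : x / (2 * π) ∈ Set.Icc (0 : ℝ) 1 := by
    rw [Set.mem_Icc, le_div_iff₀ (by positivity), div_le_one (by positivity)]
    simpa using hx
  convert hasSum_one_div_nat_pow_mul_cos one_ne_zero hx' using 1
  · ext n
    congr 2
    field_simp
  · simp only [Nat.reduceMul, Nat.reduceAdd, even_two, Even.neg_pow, one_pow, one_mul,
      Nat.factorial_two, Nat.cast_ofNat, Polynomial.bernoulli_two, Polynomial.map_add,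
      Polynomial.map_sub, Polynomial.map_pow, Polynomial.map_X, Polynomial.map_C, map_inv₀,
      eq_ratCast, Rat.cast_ofNat, Polynomial.eval_add, Polynomial.eval_sub, Polynomial.eval_pow,
      Polynomial.eval_X, Polynomial.eval_C]
    field_simp
    ring

theorem hasSum_cos_sq_div_sq {θ : ℝ} (hθ : θ ∈ Set.Icc 0 π) :
    HasSum (fun n : ℕ => cos (n * θ) ^ 2 / (n : ℝ) ^ 2)
      (π ^ 2 / 6 - π * θ / 2 + θ ^ 2 / 2) := by
  have h2θ : 2 * θ ∈ Set.Icc 0 (2 * π) := ⟨by linarith [hθ.1], by linarith [hθ.2]⟩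
  have h := (hasSum_zeta_two.add (hasSum_one_div_nat_sq_mul_cos h2θ)).div_const 2
  rw [show π ^ 2 / 6 - π * θ / 2 + θ ^ 2 / 2
      = (π ^ 2 / 6 + (π ^ 2 / 6 - π * (2 * θ) / 2 + (2 * θ) ^ 2 / 4)) / 2 by ring]
  refine h.congr_fun fun n => ?_
  rw [mul_left_comm, cos_sq]
  ring

theorem sum_range_sum_range_sub_of_even {M : Type*} [AddCommMonoid M] {f : ℤ → M}
    (hf : Function.Even f) (N : ℕ) :
    ∑ m ∈ range N, ∑ n ∈ range N, f (m - n) =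
      N • f 0 + 2 • ∑ j ∈ range N, ∑ k ∈ range j, f (k + 1) := by
  induction N with
  | zero => simp
  | succ N ih =>
    have hrow : ∑ n ∈ range N, f (N - n) = ∑ k ∈ range N, f (k + 1) := by
      rw [← sum_range_reflect]
      refine sum_congr rfl fun n hn => ?_
      congr 1
      have := mem_range.mp hn
      omega
    have hcol : ∑ m ∈ range N, f (m - N) = ∑ k ∈ range N, f (k + 1) := by
      rw [← hrow]
      refine sum_congr rfl fun m _ => ?_
      rw [← hf, neg_sub]
    simp only [sum_range_succ, sum_add_distrib, ih, hrow, hcol, sub_self]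
    rw [succ_nsmul (f 0) N]
    abel

theorem tendsto_sum_range_sum_range_sub_div {f : ℤ → ℝ} (hf : Function.Even f) {s : ℝ}
    (hs : HasSum (fun k : ℕ => f (k + 1)) s) :
    Tendsto (fun N : ℕ => (∑ m ∈ range N, ∑ n ∈ range N, f (m - n)) / N) atTop
      (nhds (f 0 + 2 * s)) := by
  refine ((hs.tendsto_sum_nat.cesaro.const_mul 2).const_add (f 0)).congr' ?_
  filter_upwards [eventually_ne_atTop 0] with N hN
  rw [sum_range_sum_range_sub_of_even hf, nsmul_eq_mul, nsmul_eq_mul]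
  field_simp
  push_cast
  ring

theorem Matrix.trace_mul_self_eq_neg_sum_sq_of_odd {R : Type*} [CommRing R] {a : ℤ → R}
    (ha : Function.Odd a) {N : ℕ} (A : Matrix (Fin N) (Fin N) R)
    (hA : ∀ m n, A m n = a (m - n)) :
    trace (A * A) = -∑ m ∈ range N, ∑ n ∈ range N, a (m - n) ^ 2 := by
  have hentry : ∀ m n, A m n * A n m = -a (m - n) ^ 2 := fun m n => by
    have h := ha ((m : ℤ) - n)
    rw [neg_sub] at h
    rw [hA, hA, h, mul_neg, sq]
  simp only [trace, diag, mul_apply, hentry, sum_neg_distrib]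
  rw [Fin.sum_univ_eq_sum_range (fun m => ∑ n : Fin N, a (m - n) ^ 2)]
  exact congrArg _ <|
    sum_congr rfl fun m _ => Fin.sum_univ_eq_sum_range (fun n => a (m - n) ^ 2) N

-- At `k = 0` this is `cos 0 / 0 = 0` (Lean's `x / 0 = 0`), the zero diagonal of `A_N(θ)`.
noncomputable def oscillatorySymbol (θ : ℝ) (k : ℤ) : ℝ := cos (k * θ) / k

theorem oscillatorySymbol_odd (θ : ℝ) : Function.Odd (oscillatorySymbol θ) := fun k => by
  simp only [oscillatorySymbol, Int.cast_neg, neg_mul, cos_neg, div_neg]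

theorem hasSum_oscillatorySymbol_sq {θ : ℝ} (hθ : θ ∈ Set.Icc 0 π) :
    HasSum (fun k : ℕ => oscillatorySymbol θ (k + 1) ^ 2)
      (π ^ 2 / 6 - π * θ / 2 + θ ^ 2 / 2) := by
  simpa [oscillatorySymbol, div_pow] using
    (hasSum_nat_add_iff' 1).mpr (hasSum_cos_sq_div_sq hθ)

theorem tendsto_trace_sq_oscillatory_A (θ : ℝ) (hθ0 : 0 ≤ θ) (hθ1 : θ ≤ π / 2)
    (A : (N : ℕ) → Matrix (Fin N) (Fin N) ℝ)
    (hA : ∀ (N : ℕ) (m n : Fin N), A N m n =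
      if m = n then 0 else Real.cos (((m : ℝ) - (n : ℝ)) * θ) / ((m : ℝ) - (n : ℝ))) :
    Filter.Tendsto (fun N : ℕ => Matrix.trace (A N * A N) / (N : ℝ)) Filter.atTop
      (nhds (-(π ^ 2 / 3 + θ ^ 2 - π * θ))) := by
  have hA_toeplitz : ∀ N (m n : Fin N), A N m n = oscillatorySymbol θ (m - n) := fun N m n => by
    rw [hA]
    split_ifs with hmn
    · rw [hmn, sub_self, (oscillatorySymbol_odd θ).map_zero]
    · simp [oscillatorySymbol]
  have hsq_even : Function.Even fun k => oscillatorySymbol θ k ^ 2 := fun k => by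
    simp only [oscillatorySymbol_odd θ k, neg_sq]
  have hlim := (tendsto_sum_range_sum_range_sub_div hsq_even
    (hasSum_oscillatorySymbol_sq ⟨hθ0, by linarith⟩)).neg
  simp only [trace_mul_self_eq_neg_sum_sq_of_odd (oscillatorySymbol_odd θ) _ (hA_toeplitz _),
    neg_div]
  convert hlim using 2
  rw [(oscillatorySymbol_odd θ).map_zero]
  ring
end

section
/- For 0 ≤ θ ≤ π/2, the limit as N → ∞ of trace(B_N(θ)²)/N equals πθ. -/
/-!
`B_N(θ)` is the symmetric Toeplitz matrix of the kernel `x ↦ sin (x θ) / x`, so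
`trace (B_N(θ)²) = N θ² + 2 ∑_{k < N} S_k`, where `S_k` are the partial sums of
`∑_{d ≥ 1} (sin (d θ) / d)²`. Writing `sin² = (1 - cos 2·) / 2` and using
`∑ 1 / n² = π² / 6` and the Fourier series `∑ cos (2 n θ) / n² = θ² - π θ + π² / 6`
(valid for `0 ≤ θ ≤ π`), that series sums to `(π θ - θ²) / 2`. By Cesàro,
`trace (B_N(θ)²) / N → θ² + (π θ - θ²) = π θ`.
-/

open Matrix Finset Real Filter

namespace Finset

variable {M : Type*} [AddCommMonoid M]

theorem sum_range_sum_range_of_symm (g : ℕ → ℕ → M) (hg : ∀ m n, g m n = g n m) (N : ℕ) :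
    ∑ m ∈ range N, ∑ n ∈ range N, g m n =
      ∑ m ∈ range N, g m m + 2 • ∑ m ∈ range N, ∑ n ∈ range m, g m n := by
  induction N with
  | zero => simp
  | succ N ih =>
    have hcol : ∑ m ∈ range N, g m N = ∑ n ∈ range N, g N n := sum_congr rfl fun m _ => hg m N
    simp only [sum_range_succ, sum_add_distrib, ih, hcol, two_nsmul]
    abel

theorem sum_range_apply_sub (a : ℤ → M) (m : ℕ) :
    ∑ n ∈ range m, a (m - n) = ∑ d ∈ range m, a (d + 1) := by
  rw [← sum_range_reflect (fun d : ℕ => a (d + 1)) m]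
  refine sum_congr rfl fun n hn => ?_
  have hnm := mem_range.1 hn
  congr 1
  omega

theorem sum_range_sum_range_of_even (a : ℤ → M) (ha : Function.Even a) (N : ℕ) :
    ∑ m ∈ range N, ∑ n ∈ range N, a (m - n) =
      N • a 0 + 2 • ∑ k ∈ range N, ∑ d ∈ range k, a (d + 1) := by
  rw [sum_range_sum_range_of_symm _ fun m n => by rw [← ha, neg_sub]]
  simp only [sub_self, sum_const, card_range, sum_range_apply_sub]

end Finset

namespace Matrix

def toeplitz {R : Type*} (a : ℤ → R) (N : ℕ) : Matrix (Fin N) (Fin N) R :=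
  of fun i j => a ((i : ℕ) - (j : ℕ))

theorem trace_toeplitz_mul_self {R : Type*} [CommSemiring R] (a : ℤ → R) (N : ℕ) :
    trace (toeplitz a N * toeplitz a N) =
      N * a 0 ^ 2 + 2 * ∑ k ∈ range N, ∑ d ∈ range k, a (d + 1) * a (-(d + 1)) := by
  have heven : Function.Even fun x => a x * a (-x) := fun x => by simp only [neg_neg, mul_comm]
  calc trace (toeplitz a N * toeplitz a N)
      = ∑ m ∈ range N, ∑ n ∈ range N, a (m - n) * a (-(m - n)) := by
        simp only [trace, diag, mul_apply, toeplitz, of_apply, neg_sub, Finset.sum_range]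
    _ = _ := by
        rw [sum_range_sum_range_of_even _ heven, neg_zero, nsmul_eq_mul, nsmul_eq_mul, sq]
        push_cast
        ring

end Matrix

/-- The continuous extension of `x ↦ sin (x θ) / x` to `x = 0`. -/
noncomputable def oscKernel (θ x : ℝ) : ℝ := if x = 0 then θ else sin (x * θ) / x

theorem oscKernel_neg (θ x : ℝ) : oscKernel θ (-x) = oscKernel θ x := by
  simp only [oscKernel, neg_eq_zero, neg_mul, sin_neg, neg_div_neg_eq]

theorem hasSum_sin_mul_div_sq {θ : ℝ} (h0 : 0 ≤ θ) (h1 : θ ≤ π) :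
    HasSum (fun n : ℕ => (sin (n * θ) / n) ^ 2) ((π * θ - θ ^ 2) / 2) := by
  have hx : θ / π ∈ Set.Icc (0 : ℝ) 1 := ⟨div_nonneg h0 pi_pos.le, (div_le_one pi_pos).2 h1⟩
  have hcos : HasSum (fun n : ℕ => 1 / (n : ℝ) ^ 2 * cos (2 * n * θ))
      (θ ^ 2 - π * θ + π ^ 2 / 6) := by
    convert hasSum_one_div_nat_pow_mul_cos one_ne_zero hx using 1
    · ext n
      rw [mul_one]
      field_simp
    · simp [Polynomial.bernoulli, sum_range_succ, bernoulli_two]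
      field_simp
      ring
  have h := (hasSum_zeta_two.sub hcos).div_const 2
  rw [show (π ^ 2 / 6 - (θ ^ 2 - π * θ + π ^ 2 / 6)) / 2 = (π * θ - θ ^ 2) / 2 by ring] at h
  refine h.congr_fun fun n => ?_
  rw [div_pow, sin_sq_eq_half_sub]
  ring_nf

theorem trace_toeplitz_oscKernel_mul_self (θ : ℝ) (N : ℕ) :
    trace (toeplitz (fun x : ℤ => oscKernel θ x) N * toeplitz (fun x : ℤ => oscKernel θ x) N) =
      N * θ ^ 2 + 2 * ∑ k ∈ range N, ∑ d ∈ range k, (sin ((d + 1 : ℕ) * θ) / (d + 1 : ℕ)) ^ 2 := by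
  have hd (d : ℕ) : oscKernel θ ((d + 1 : ℤ) : ℝ) * oscKernel θ ((-(d + 1) : ℤ) : ℝ) =
      (sin ((d + 1 : ℕ) * θ) / (d + 1 : ℕ)) ^ 2 := by
    rw [Int.cast_neg, oscKernel_neg, ← sq, oscKernel, if_neg (by positivity)]
    push_cast
    rfl
  have h0 : oscKernel θ ((0 : ℤ) : ℝ) = θ := by simp [oscKernel]
  simp only [trace_toeplitz_mul_self, hd, h0]

theorem tendsto_trace_sq_oscillatory_B (θ : ℝ) (hθ0 : 0 ≤ θ) (hθ1 : θ ≤ π / 2)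
    (B : (N : ℕ) → Matrix (Fin N) (Fin N) ℝ)
    (hB : ∀ (N : ℕ) (m n : Fin N), B N m n =
      if m = n then θ else Real.sin (((m : ℝ) - (n : ℝ)) * θ) / ((m : ℝ) - (n : ℝ))) :
    Filter.Tendsto (fun N : ℕ => Matrix.trace (B N * B N) / (N : ℝ)) Filter.atTop
      (nhds (π * θ)) := by
  have hBT (N : ℕ) : B N = toeplitz (fun x : ℤ => oscKernel θ x) N := by
    ext i j
    rw [hB, toeplitz, of_apply, oscKernel]
    push_cast
    simp [sub_eq_zero, Fin.val_inj]
  have hs := (hasSum_nat_add_iff' 1).2 (hasSum_sin_mul_div_sq hθ0 (by linarith [pi_pos]))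
  simp only [sum_range_one, CharP.cast_eq_zero, div_zero, zero_pow two_ne_zero, sub_zero] at hs
  have hlim := (hs.tendsto_sum_nat.cesaro.const_mul 2).const_add (θ ^ 2)
  rw [show θ ^ 2 + 2 * ((π * θ - θ ^ 2) / 2) = π * θ by ring] at hlim
  refine hlim.congr' ?_
  filter_upwards [eventually_ne_atTop 0] with N hN
  rw [hBT, trace_toeplitz_oscKernel_mul_self]
  field_simp
end

section
/- Let N ≥ 2, ζ_N = exp(2πi/N), and 1 ≤ k ≤ N. Then ∑_{n=1}^{N-1} ζ_N^{kn}/(1 - ζ_N^n) = k - (N+1)/2. -/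
/-!
With `w = ζ ^ n`, the identity `w ^ (k + 1) / (1 - w) = w ^ k / (1 - w) - w ^ k` shows that raising
`k` by one subtracts `∑ n, ζ ^ (k * n)`, which is `-1` for `0 < k < N` (a vanishing geometric sum
without its `n = 0` term). This reduces everything to `∑ n, 1 / (1 - ζ ^ n) = (N - 1) / 2`, which
follows by pairing `n` with `N - n`, because `1 / (1 - w) + 1 / (1 - w⁻¹) = 1`.
-/

open Complex Finset

namespace Finset

variable {M : Type*} [AddCommMonoid M]

theorem sum_Icc_one_pred_reflect (f : ℕ → M) (N : ℕ) :
    ∑ n ∈ Icc 1 (N - 1), f (N - n) = ∑ n ∈ Icc 1 (N - 1), f n :=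
  sum_nbij' (N - ·) (N - ·) (fun n hn => by simp only [mem_Icc] at hn ⊢; omega)
    (fun n hn => by simp only [mem_Icc] at hn ⊢; omega)
    (fun n hn => by simp only [mem_Icc] at hn; omega)
    (fun n hn => by simp only [mem_Icc] at hn; omega) fun _ _ => rfl

theorem sum_range_eq_add_sum_Icc_one_pred (f : ℕ → M) {N : ℕ} (hN : 0 < N) :
    ∑ n ∈ range N, f n = f 0 + ∑ n ∈ Icc 1 (N - 1), f n := by
  rw [range_eq_Ico, sum_eq_sum_Ico_succ_bot hN, ← Ico_add_one_right_eq_Icc,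
    Nat.sub_one_add_one hN.ne']

end Finset

variable {K : Type*} [Field K]

theorem one_div_one_sub_add_one_div_one_sub_of_mul_eq_one {w v : K} (hw : w ≠ 1)
    (hwv : w * v = 1) : 1 / (1 - w) + 1 / (1 - v) = 1 := by
  have hv : v ≠ 1 := by rintro rfl; exact hw (by simpa using hwv)
  have hw' : 1 - w ≠ 0 := sub_ne_zero.mpr hw.symm
  have hv' : 1 - v ≠ 0 := sub_ne_zero.mpr hv.symm
  field_simp
  linear_combination -hwv

theorem pow_succ_div_one_sub {w : K} (hw : w ≠ 1) (k : ℕ) :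
    w ^ (k + 1) / (1 - w) = w ^ k / (1 - w) - w ^ k := by
  have hw' : 1 - w ≠ 0 := sub_ne_zero.mpr hw.symm
  field_simp
  ring

namespace IsPrimitiveRoot

variable {ζ : K} {N : ℕ}

theorem sum_Icc_one_pred_pow_mul_eq_neg_one (hζ : IsPrimitiveRoot ζ N) (hN : 0 < N) {j : ℕ}
    (hj : ¬ N ∣ j) : ∑ n ∈ Icc 1 (N - 1), ζ ^ (j * n) = -1 := by
  have hne : ζ ^ j ≠ 1 := fun h => hj ((hζ.pow_eq_one_iff_dvd j).mp h)
  have hgeom : ∑ n ∈ range N, (ζ ^ j) ^ n = 0 := by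
    rw [geom_sum_eq hne, ← pow_mul, mul_comm, pow_mul, hζ.pow_eq_one, one_pow, sub_self, zero_div]
  rw [sum_range_eq_add_sum_Icc_one_pred _ hN, pow_zero] at hgeom
  simp only [pow_mul]
  linear_combination hgeom

theorem two_mul_sum_one_div_one_sub_pow (hζ : IsPrimitiveRoot ζ N) (hN : 0 < N) :
    2 * ∑ n ∈ Icc 1 (N - 1), 1 / (1 - ζ ^ n) = N - 1 := by
  have hpair : ∀ n ∈ Icc 1 (N - 1), 1 / (1 - ζ ^ n) + 1 / (1 - ζ ^ (N - n)) = 1 := by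
    intro n hn
    rw [mem_Icc] at hn
    refine one_div_one_sub_add_one_div_one_sub_of_mul_eq_one
      (hζ.pow_ne_one_of_pos_of_lt (by omega) (by omega)) ?_
    rw [← pow_add, Nat.add_sub_cancel' (by omega), hζ.pow_eq_one]
  calc 2 * ∑ n ∈ Icc 1 (N - 1), 1 / (1 - ζ ^ n)
      = ∑ n ∈ Icc 1 (N - 1), (1 / (1 - ζ ^ n) + 1 / (1 - ζ ^ (N - n))) := by
        rw [sum_add_distrib, sum_Icc_one_pred_reflect (fun n => 1 / (1 - ζ ^ n)), two_mul]
    _ = N - 1 := by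
        rw [sum_congr rfl hpair, sum_const, Nat.card_Icc, Nat.add_sub_cancel, nsmul_one,
          Nat.cast_pred hN]

theorem sum_pow_succ_mul_div_one_sub (hζ : IsPrimitiveRoot ζ N) (k : ℕ) :
    ∑ n ∈ Icc 1 (N - 1), ζ ^ ((k + 1) * n) / (1 - ζ ^ n) =
      ∑ n ∈ Icc 1 (N - 1), ζ ^ (k * n) / (1 - ζ ^ n) - ∑ n ∈ Icc 1 (N - 1), ζ ^ (k * n) := by
  rw [← sum_sub_distrib]
  refine sum_congr rfl fun n hn => ?_
  rw [mem_Icc] at hn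
  simp only [pow_mul']
  exact pow_succ_div_one_sub (hζ.pow_ne_one_of_pos_of_lt (by omega) (by omega)) k

theorem two_mul_sum_pow_mul_div_one_sub (hζ : IsPrimitiveRoot ζ N) {k : ℕ} (hk1 : 1 ≤ k)
    (hk2 : k ≤ N) :
    2 * ∑ n ∈ Icc 1 (N - 1), ζ ^ (k * n) / (1 - ζ ^ n) = 2 * k - (N + 1) := by
  have hN : 0 < N := by omega
  induction k, hk1 using Nat.le_induction with
  | base =>
    rw [hζ.sum_pow_succ_mul_div_one_sub 0]
    simp only [zero_mul, pow_zero, sum_const, Nat.card_Icc, Nat.add_sub_cancel, nsmul_one]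
    rw [mul_sub, hζ.two_mul_sum_one_div_one_sub_pow hN, Nat.cast_pred hN]
    push_cast
    ring
  | succ k hk ih =>
    rw [hζ.sum_pow_succ_mul_div_one_sub k, mul_sub, ih (by omega),
      hζ.sum_Icc_one_pred_pow_mul_eq_neg_one hN (Nat.not_dvd_of_pos_of_lt hk (by omega))]
    push_cast
    ring

end IsPrimitiveRoot

theorem sum_pow_div_one_sub_root_of_unity_general (N : ℕ)
    (ζ : ℂ) (hζ : ζ = Complex.exp (2 * (Real.pi : ℂ) * Complex.I / N))
    (k : ℕ) (hk1 : 1 ≤ k) (hk2 : k ≤ N) :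
    ∑ n ∈ Finset.Icc 1 (N - 1), ζ ^ (k * n) / (1 - ζ ^ n) = (k : ℂ) - ((N : ℂ) + 1) / 2 := by
  have hprim : IsPrimitiveRoot ζ N := hζ ▸ isPrimitiveRoot_exp N (by omega)
  linear_combination hprim.two_mul_sum_pow_mul_div_one_sub hk1 hk2 / 2

theorem sum_pow_div_one_sub_root_of_unity (N : ℕ) (hN : 2 ≤ N)
    (ζ : ℂ) (hζ : ζ = Complex.exp (2 * (Real.pi : ℂ) * Complex.I / N))
    (k : ℕ) (hk1 : 1 ≤ k) (hk2 : k ≤ N) :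
    ∑ n ∈ Finset.Icc 1 (N - 1), ζ ^ (k * n) / (1 - ζ ^ n) = (k : ℂ) - ((N : ℂ) + 1) / 2 :=
  sum_pow_div_one_sub_root_of_unity_general N ζ hζ k hk1 hk2
end

section
/- For N ≥ 2, the spectrum of A_N^quant (as a matrix over ℂ) is exactly { 2i·sin(π/N)·(k - (N+1)/2) : k = 1, ..., N }. -/
/-!
With `g j = sin (π / N) / sin (π j / N)` we have `A m n = g (m - n)`, and `g (j + N) = -g j`:
the matrix is skew-circulant. Hence for every `ζ` with `ζ ^ N = -1` the vector `(ζ ^ n)ₙ` is an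
eigenvector, with eigenvalue `∑_{j < N} g (-j) ζ ^ j`. For `ζ = exp ((2k - 1) π i / N)`, writing
`sin` through exponentials turns this eigenvalue into
`-2 i sin (π / N) ∑_{0 < j < N} η ^ (j k) / (η ^ j - 1)` with `η = exp (2 π i / N)`, and the
root-of-unity identity `∑_{0 < j < N} η ^ (j k) / (η ^ j - 1) = (N + 1) / 2 - k` (pair `j` with
`N - j` for `k = 0`, then expand `η ^ (j k) / (η ^ j - 1)` as a geometric sum) evaluates it to
`2 i sin (π / N) (k - (N + 1) / 2)`. These are `N` distinct eigenvalues of an `N × N` matrix,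
so they make up the whole spectrum.
-/

open Complex Finset Matrix Function
open scoped Real

theorem Function.Periodic.sum_range_comp_add {M : Type*} [AddCancelCommMonoid M] {f : ℤ → M}
    {N : ℕ} (hf : Periodic f N) (c : ℤ) : ∑ j ∈ range N, f (j + c) = ∑ j ∈ range N, f j := by
  have hstep : ∀ c : ℤ, ∑ j ∈ range N, f (j + (c + 1)) = ∑ j ∈ range N, f (j + c) := by
    intro c
    have h := sum_range_succ' (fun j : ℕ => f (j + c)) N
    push_cast at h
    rw [sum_range_succ, add_comm (N : ℤ) c, hf c, zero_add] at h
    simpa only [add_assoc, add_comm (1 : ℤ)] using (add_right_cancel h).symm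
  induction c using Int.induction_on with
  | zero => simp
  | succ c ih => rw [hstep, ih]
  | pred c ih => rw [← ih, ← hstep, sub_add_cancel]

theorem Matrix.mulVec_pow_of_antiperiodic {K : Type*} [Field K] {N : ℕ} {g : ℤ → K}
    (hg : Antiperiodic g N) {ζ : K} (hζ : ζ ^ N = -1) {A : Matrix (Fin N) (Fin N) K}
    (hA : ∀ m n, A m n = g (m - n)) :
    A *ᵥ (fun n => ζ ^ (n : ℕ)) =
      (∑ j ∈ range N, g (-j) * ζ ^ j) • fun n : Fin N => ζ ^ (n : ℕ) := by
  funext m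
  have hζ0 : ζ ≠ 0 := by
    rintro rfl
    simp [zero_pow (Fin.pos m).ne'] at hζ
  have hper : Periodic (fun j : ℤ => g (-j) * ζ ^ j) N :=
    Antiperiodic.mul (fun j => by simpa only [neg_add] using hg.neg (-j))
      (fun j => by simp [zpow_add₀ hζ0, hζ])
  calc (A *ᵥ fun n => ζ ^ (n : ℕ)) m
      = ∑ n : Fin N, g (-((n : ℤ) - m)) * ζ ^ ((n : ℤ) - m) * ζ ^ (m : ℕ) := by
        simp only [mulVec, dotProduct, hA, neg_sub]
        refine sum_congr rfl fun n _ => ?_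
        rw [mul_assoc, ← zpow_natCast, ← zpow_natCast, ← zpow_add₀ hζ0, sub_add_cancel]
    _ = (∑ j ∈ range N, g (-j) * ζ ^ (j : ℤ)) * ζ ^ (m : ℕ) := by
        rw [← sum_mul,
          Fin.sum_univ_eq_sum_range (fun n : ℕ => g (-((n : ℤ) - m)) * ζ ^ ((n : ℤ) - m)),
          ← hper.sum_range_comp_add (-m)]
        simp only [sub_eq_add_neg]
    _ = _ := by simp

theorem Matrix.mem_spectrum_of_mulVec_eq_smul {n K : Type*} [Fintype n] [DecidableEq n]
    [Field K] {A : Matrix n n K} {v : n → K} {μ : K} (hv : v ≠ 0) (h : A *ᵥ v = μ • v) :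
    μ ∈ spectrum K A := by
  rw [← spectrum_toLin', ← Module.End.hasEigenvalue_iff_mem_spectrum]
  exact Module.End.hasEigenvalue_of_hasEigenvector
    ⟨Module.End.mem_eigenspace_iff.mpr (by simpa using h), hv⟩

theorem Matrix.spectrum_eq_of_subset_of_card_le {n K : Type*} [Fintype n] [DecidableEq n]
    [Field K] {A : Matrix n n K} {S : Finset K} (hS : ↑S ⊆ spectrum K A)
    (hcard : Fintype.card n ≤ S.card) : spectrum K A = S := by
  classical
  have hroots : spectrum K A = ↑A.charpoly.roots.toFinset := by
    ext μ
    simp [mem_spectrum_iff_isRoot_charpoly, A.charpoly_monic.ne_zero]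
  have hcard_roots : A.charpoly.roots.toFinset.card ≤ Fintype.card n :=
    (Multiset.toFinset_card_le _).trans
      ((Polynomial.card_roots' _).trans A.charpoly_natDegree_eq_dim.le)
  rw [hroots] at hS ⊢
  exact_mod_cast (eq_of_subset_of_card_le (by exact_mod_cast hS) (hcard_roots.trans hcard)).symm

theorem inv_sub_one_add_inv_sub_one {K : Type*} [Field K] {x y : K} (hxy : x * y = 1)
    (hx : x ≠ 1) : (x - 1)⁻¹ + (y - 1)⁻¹ = -1 := by
  have hy : y ≠ 1 := by
    rintro rfl
    exact hx (by simpa using hxy)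
  have hx' : x - 1 ≠ 0 := sub_ne_zero.mpr hx
  have hy' : y - 1 ≠ 0 := sub_ne_zero.mpr hy
  field_simp
  linear_combination hxy

theorem pow_div_sub_one_eq_inv_add_geom_sum {K : Type*} [Field K] {x : K} (hx : x ≠ 1)
    (k : ℕ) : x ^ k / (x - 1) = (x - 1)⁻¹ + ∑ i ∈ range k, x ^ i := by
  have hx' : x - 1 ≠ 0 := sub_ne_zero.mpr hx
  rw [geom_sum_eq hx]
  field_simp
  ring

namespace IsPrimitiveRoot

variable {K : Type*} [Field K] {η : K} {N : ℕ}

theorem sum_Ico_pow_pow_eq_neg_one (hη : IsPrimitiveRoot η N) {i : ℕ} (hi0 : 0 < i)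
    (hiN : i < N) : ∑ j ∈ Ico 1 N, (η ^ j) ^ i = -1 := by
  have hne : η ^ i ≠ 1 := hη.pow_ne_one_of_pos_of_lt hi0.ne' hiN
  have hgeom : ∑ j ∈ range N, (η ^ i) ^ j = 0 := by
    rw [geom_sum_eq hne, ← pow_mul, mul_comm, pow_mul, hη.pow_eq_one, one_pow, sub_self,
      zero_div]
  rw [sum_range_eq_add_Ico _ (hi0.trans hiN), pow_zero] at hgeom
  rw [neg_eq_of_add_eq_zero_right hgeom]
  exact sum_congr rfl fun j _ => pow_right_comm η j i

theorem two_mul_sum_Ico_inv_pow_sub_one (hη : IsPrimitiveRoot η N) (hN : 0 < N) :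
    2 * ∑ j ∈ Ico 1 N, (η ^ j - 1)⁻¹ = 1 - N := by
  have hreflect : ∑ j ∈ Ico 1 N, (η ^ (N - j) - 1)⁻¹ = ∑ j ∈ Ico 1 N, (η ^ j - 1)⁻¹ := by
    rw [sum_Ico_reflect (fun j => (η ^ j - 1)⁻¹) 1 N.le_succ, Nat.add_sub_cancel_left,
      Nat.add_sub_cancel]
  have hpair : ∀ j ∈ Ico 1 N, (η ^ j - 1)⁻¹ + (η ^ (N - j) - 1)⁻¹ = -1 := by
    intro j hj
    rw [mem_Ico] at hj
    refine inv_sub_one_add_inv_sub_one ?_ (hη.pow_ne_one_of_pos_of_lt (by omega) hj.2)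
    rw [← pow_add, Nat.add_sub_cancel' hj.2.le, hη.pow_eq_one]
  rw [two_mul]
  nth_rw 2 [← hreflect]
  rw [← sum_add_distrib, sum_congr rfl hpair]
  simp [Nat.cast_sub hN]

theorem two_mul_sum_Ico_pow_pow_div_pow_sub_one (hη : IsPrimitiveRoot η N) {k : ℕ}
    (hk : 0 < k) (hkN : k ≤ N) :
    2 * ∑ j ∈ Ico 1 N, (η ^ j) ^ k / (η ^ j - 1) = N + 1 - 2 * k := by
  have hN : 0 < N := hk.trans_le hkN
  have hsplit : ∀ j ∈ Ico 1 N,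
      (η ^ j) ^ k / (η ^ j - 1) = (η ^ j - 1)⁻¹ + ∑ i ∈ range k, (η ^ j) ^ i := by
    intro j hj
    rw [mem_Ico] at hj
    exact pow_div_sub_one_eq_inv_add_geom_sum
      (hη.pow_ne_one_of_pos_of_lt (by omega) hj.2) k
  have hinner : ∑ i ∈ Ico 1 k, ∑ j ∈ Ico 1 N, (η ^ j) ^ i = -(k - 1 : ℕ) := by
    rw [sum_congr rfl fun i hi => hη.sum_Ico_pow_pow_eq_neg_one (mem_Ico.mp hi).1
      ((mem_Ico.mp hi).2.trans_le hkN)]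
    simp
  rw [sum_congr rfl hsplit, sum_add_distrib, sum_comm, sum_range_eq_add_Ico _ hk, hinner,
    mul_add, hη.two_mul_sum_Ico_inv_pow_sub_one hN]
  simp only [pow_zero, sum_const, Nat.card_Ico, nsmul_eq_mul, mul_one, Nat.cast_sub hN,
    Nat.cast_sub hk, Nat.cast_one]
  ring

end IsPrimitiveRoot

theorem Complex.exp_two_mul_mul_I_sub_one (x : ℂ) :
    exp (2 * x * I) - 1 = 2 * I * sin x * exp (x * I) := by
  rw [show 2 * x * I = x * I + x * I by ring, exp_add, exp_mul_I]
  linear_combination (-sin x ^ 2) * I_sq + sin_sq_add_cos_sq x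

theorem Complex.exp_odd_mul_mul_I_div_sin (x : ℂ) (k : ℕ) :
    exp ((2 * k - 1) * x * I) / sin x =
      2 * I * (exp (2 * x * I) ^ k / (exp (2 * x * I) - 1)) := by
  have hsplit : exp (2 * x * I) ^ k = exp ((2 * k - 1) * x * I) * exp (x * I) := by
    rw [← exp_nat_mul, ← exp_add]
    ring_nf
  rw [exp_two_mul_mul_I_sub_one, hsplit, mul_div_mul_right _ _ (exp_ne_zero _), mul_div_assoc',
    mul_div_mul_left _ _ (mul_ne_zero two_ne_zero I_ne_zero)]

theorem Complex.exp_odd_mul_pi_mul_I_div_pow {N : ℕ} (hN : N ≠ 0) (k : ℕ) :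
    exp ((2 * k - 1) * π * I / N) ^ N = -1 := by
  rw [← exp_nat_mul, show (N : ℂ) * ((2 * k - 1) * π * I / N) = k * (2 * π * I) - π * I by
      field_simp,
    exp_sub, exp_nat_mul_two_pi_mul_I, exp_pi_mul_I]
  norm_num

/-- At `j = 0` the denominator is `sin 0 = 0`, so the kernel vanishes there (`x / 0 = 0`),
matching the zero diagonal of the matrix. -/
noncomputable def quantHilbertKernel (N : ℕ) (j : ℤ) : ℂ :=
  ((Real.sin (π / N) / Real.sin (π * j / N) : ℝ) : ℂ)

theorem quantHilbertKernel_sub (N : ℕ) (m n : Fin N) :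
    quantHilbertKernel N (m - n) = if m = n then 0
      else ((Real.sin (π / N) / Real.sin (π * ((m : ℝ) - (n : ℝ)) / N) : ℝ) : ℂ) := by
  rw [quantHilbertKernel]
  split_ifs with h
  · simp [h]
  · push_cast
    rfl

theorem quantHilbertKernel_antiperiodic (N : ℕ) : Antiperiodic (quantHilbertKernel N) N := by
  intro j
  rcases eq_or_ne N 0 with rfl | hN
  · simp [quantHilbertKernel]
  have harg : π * ((j + N : ℤ) : ℝ) / N = π * j / N + π := by
    push_cast
    field_simp
  rw [quantHilbertKernel, quantHilbertKernel, harg, Real.sin_add_pi, div_neg, ofReal_neg]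

noncomputable def quantHilbertEigenvalue (N k : ℕ) : ℂ :=
  2 * I * Real.sin (π / N) * ((k : ℂ) - ((N : ℂ) + 1) / 2)

theorem quantHilbertEigenvalue_injective {N : ℕ} (hN : 2 ≤ N) :
    Injective (quantHilbertEigenvalue N) := by
  intro a b hab
  have hsin : 0 < Real.sin (π / N) := Real.sin_pos_of_pos_of_lt_pi (by positivity)
    (div_lt_self Real.pi_pos (by exact_mod_cast hN))
  have hc : 2 * I * (Real.sin (π / N) : ℂ) ≠ 0 :=
    mul_ne_zero (mul_ne_zero two_ne_zero I_ne_zero) (ofReal_ne_zero.mpr hsin.ne')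
  exact_mod_cast sub_left_inj.mp (mul_left_cancel₀ hc hab)

theorem sum_range_quantHilbertKernel_neg_mul_pow {N k : ℕ} (hk : 0 < k) (hkN : k ≤ N) :
    ∑ j ∈ range N, quantHilbertKernel N (-j) * exp ((2 * k - 1) * π * I / N) ^ j
      = quantHilbertEigenvalue N k := by
  have hN : 0 < N := hk.trans_le hkN
  set η := exp (2 * π * I / N)
  have hterm : ∀ j : ℕ, quantHilbertKernel N (-j) * exp ((2 * k - 1) * π * I / N) ^ j
      = -Real.sin (π / N) * (2 * I * ((η ^ j) ^ k / (η ^ j - 1))) := by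
    intro j
    have hζ : exp ((2 * k - 1) * π * I / N) ^ j = exp ((2 * k - 1) * (π * j / N) * I) := by
      rw [← exp_nat_mul]
      ring_nf
    have hη : η ^ j = exp (2 * (π * j / N) * I) := by
      rw [← exp_nat_mul]
      ring_nf
    rw [quantHilbertKernel, hζ, hη, ← exp_odd_mul_mul_I_div_sin]
    push_cast [mul_neg, neg_div, sin_neg]
    ring
  have hsum := (isPrimitiveRoot_exp N hN.ne').two_mul_sum_Ico_pow_pow_div_pow_sub_one hk hkN
  rw [sum_congr rfl fun j _ => hterm j, ← mul_sum, ← mul_sum, sum_range_eq_add_Ico _ hN]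
  -- the `j = 0` term is `1 / (1 - 1) = 0`
  simp only [pow_zero, one_pow, sub_self, div_zero, zero_add]
  rw [quantHilbertEigenvalue]
  linear_combination (-(I * Real.sin (π / N))) * hsum

theorem spectrum_quant_alternating_hilbert (N : ℕ) (hN : 2 ≤ N)
    (A : Matrix (Fin N) (Fin N) ℂ)
    (hA : ∀ m n : Fin N, A m n = if m = n then 0
      else ((Real.sin (Real.pi / N) / Real.sin (Real.pi * ((m : ℝ) - (n : ℝ)) / N) : ℝ) : ℂ)) :
    spectrum ℂ A =
      {z : ℂ | ∃ k ∈ Finset.Icc 1 N,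
        z = 2 * Complex.I * Real.sin (Real.pi / N) * ((k : ℂ) - ((N : ℂ) + 1) / 2)} := by
  have hAK : ∀ m n : Fin N, A m n = quantHilbertKernel N (m - n) := fun m n =>
    (hA m n).trans (quantHilbertKernel_sub N m n).symm
  have heig : ∀ k ∈ Icc 1 N, quantHilbertEigenvalue N k ∈ spectrum ℂ A := by
    intro k hk
    obtain ⟨hk1, hkN⟩ := mem_Icc.mp hk
    refine mem_spectrum_of_mulVec_eq_smul
      (v := fun n : Fin N => exp ((2 * k - 1) * π * I / N) ^ (n : ℕ))
      (Function.ne_iff.mpr ⟨⟨0, by omega⟩, by simp⟩) ?_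
    rw [mulVec_pow_of_antiperiodic (quantHilbertKernel_antiperiodic N)
      (exp_odd_mul_pi_mul_I_div_pow (by omega) k) hAK,
      sum_range_quantHilbertKernel_neg_mul_pow hk1 hkN]
  rw [spectrum_eq_of_subset_of_card_le (S := (Icc 1 N).image (quantHilbertEigenvalue N))
    (by rw [coe_image, Set.image_subset_iff]; exact heig)
    (by simp [card_image_of_injective _ (quantHilbertEigenvalue_injective hN)])]
  ext z
  simp [quantHilbertEigenvalue, eq_comm]
end

section
/- For N ≥ 2 and 1 ≤ k ≤ N, ∑_{n=1}^{N-1} cos(πn(2k-1)/N)/sin(πn/N) = 0. -/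
open Finset Real

theorem sum_cos_div_sin (N : ℕ) (hN : 2 ≤ N) (k : ℕ) (hk1 : 1 ≤ k) (hk2 : k ≤ N) :
    ∑ n ∈ Finset.Icc 1 (N - 1),
      Real.cos (π * n * (2 * k - 1) / N) / Real.sin (π * n / N) = 0 := by
  have hN0 : (N : ℝ) ≠ 0 := Nat.cast_ne_zero.mpr (by omega)
  apply Finset.sum_involution (fun n _ => N - n)
  · intro n hn
    simp only [Finset.mem_Icc] at hn
    have hnN : n ≤ N := by omega
    have hcast : ((N - n : ℕ) : ℝ) = (N : ℝ) - n := by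
      push_cast [Nat.cast_sub hnN]; ring
    have harg : π * ((N : ℝ) - n) * (2 * k - 1) / N
        = (-(π * n * (2 * k - 1) / N + π)) + k * (2 * π) := by
      field_simp; ring
    have harg2 : π * ((N : ℝ) - n) / N = π - π * n / N := by
      field_simp
    rw [hcast, harg, harg2, Real.cos_add_nat_mul_two_pi, Real.sin_pi_sub, Real.cos_neg,
      Real.cos_add_pi]
    ring
  · intro n hn hfn heq
    simp only [Finset.mem_Icc] at hn
    have hNn : N = 2 * n := by omega
    have hn0 : (n : ℝ) ≠ 0 := Nat.cast_ne_zero.mpr (by omega)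
    apply hfn
    have : π * (n : ℝ) * (2 * k - 1) / N = -(π / 2 - k * π) := by
      rw [hNn]; push_cast; field_simp; ring
    rw [this, Real.cos_neg, Real.cos_pi_div_two_sub]
    rw [Real.sin_nat_mul_pi, zero_div]
  · intro n hn
    simp only [Finset.mem_Icc] at hn ⊢
    omega
  · intro n hn
    simp only [Finset.mem_Icc] at hn
    omega
end

section
/- For N ≥ 2 and 1 ≤ k ≤ N, ∑_{n=1}^{N-1} sin(πn(2k-1)/N)/sin(πn/N) = N + 1 - 2k. -/
/-!
Writing `sin ((2k-1)x) / sin x = 1 + 2 ∑_{j=1}^{k-1} cos (2jx)` (the Dirichlet kernel) and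
exchanging the sums, each `j` with `0 < j < N` contributes `∑_{n=1}^{N-1} cos (2πjn/N) = -1`,
because the `N`-th roots of unity other than `1` sum to `-1`. Hence the total is
`(N - 1) - 2(k - 1)`.
-/

open Finset Real

theorem sin_two_mul_add_one_mul (m : ℕ) (x : ℝ) :
    sin ((2 * m + 1) * x) = sin x * (1 + 2 * ∑ j ∈ range m, cos (2 * (j + 1) * x)) := by
  have hsum := sin_mul_sum_cos m (2 * x) (2 * x)
  have hprod := two_mul_sin_mul_cos (m * x) ((m + 1) * x)
  simp only [show ∀ i : ℕ, 2 * x * i + 2 * x = 2 * (i + 1) * x by intro i; ring] at hsum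
  rw [show 2 * x / 2 = x by ring, show m * (2 * x) / 2 = m * x by ring,
    show (m - 1) * (2 * x) / 2 + 2 * x = (m + 1) * x by ring] at hsum
  rw [show m * x - (m + 1) * x = -x by ring, show m * x + (m + 1) * x = (2 * m + 1) * x by ring,
    sin_neg] at hprod
  linear_combination (-2) * hsum - hprod

theorem sum_range_cos_two_pi_mul_div_eq_zero {N j : ℕ} (hj : ¬ N ∣ j) :
    ∑ n ∈ range N, cos (2 * π * j * n / N) = 0 := by
  rcases Nat.eq_zero_or_pos N with rfl | hN
  · simp
  have hsin : sin (π * j / N) ≠ 0 := by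
    rw [Ne, sin_eq_zero_iff]
    rintro ⟨q, hq⟩
    field_simp at hq
    have hjq : (j : ℤ) = N * q := by rw [mul_comm]; exact_mod_cast hq.symm
    exact hj (Int.natCast_dvd_natCast.mp ⟨q, hjq⟩)
  have h := sin_mul_sum_cos N (2 * π * j / N) 0
  rw [show N * (2 * π * j / N) / 2 = (j : ℤ) * π by field_simp; push_cast; ring, sin_int_mul_pi,
    zero_mul, show 2 * π * j / N / 2 = π * j / N by ring] at h
  rw [← (mul_eq_zero.mp h).resolve_left hsin]
  exact sum_congr rfl fun n _ => by ring_nf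

theorem sum_Icc_cos_two_pi_mul_div_eq_neg_one {N j : ℕ} (hN : 0 < N) (hj : ¬ N ∣ j) :
    ∑ n ∈ Icc 1 (N - 1), cos (2 * π * j * n / N) = -1 := by
  have hrange : range N = insert 0 (Icc 1 (N - 1)) := by
    ext n
    simp only [mem_range, mem_insert, mem_Icc]
    omega
  have h := sum_range_cos_two_pi_mul_div_eq_zero hj
  rw [hrange, sum_insert (by simp)] at h
  simp only [CharP.cast_eq_zero, mul_zero, zero_div, cos_zero] at h
  linarith

theorem sin_pi_mul_div_pos {n N : ℕ} (hn : 0 < n) (hnN : n < N) : 0 < sin (π * n / N) := by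
  have hn' : (0 : ℝ) < n := by exact_mod_cast hn
  have hnN' : (n : ℝ) < N := by exact_mod_cast hnN
  refine sin_pos_of_pos_of_lt_pi (div_pos (mul_pos pi_pos hn') (by linarith)) ?_
  rwa [div_lt_iff₀ (by linarith), mul_lt_mul_iff_right₀ pi_pos]

theorem sum_sin_div_sin_general (N : ℕ) (k : ℕ) (hk1 : 1 ≤ k) (hk2 : k ≤ N) :
    ∑ n ∈ Finset.Icc 1 (N - 1),
      Real.sin (π * n * (2 * k - 1) / N) / Real.sin (π * n / N) = (N : ℝ) + 1 - 2 * k := by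
  obtain ⟨m, rfl⟩ : ∃ m, k = m + 1 := ⟨k - 1, by omega⟩
  have hterm : ∀ n ∈ Icc 1 (N - 1), sin (π * n * (2 * ↑(m + 1) - 1) / N) / sin (π * n / N)
      = 1 + 2 * ∑ j ∈ range m, cos (2 * π * ↑(j + 1) * n / N) := by
    intro n hn
    rw [mem_Icc] at hn
    rw [show π * n * (2 * ↑(m + 1) - 1) / N = (2 * m + 1) * (π * n / N) by push_cast; ring,
      sin_two_mul_add_one_mul, mul_div_cancel_left₀ _ (sin_pi_mul_div_pos hn.1 (by omega)).ne']
    congr 2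
    exact sum_congr rfl fun j _ => by push_cast; ring_nf
  have hcos : ∀ j ∈ range m, ∑ n ∈ Icc 1 (N - 1), cos (2 * π * ↑(j + 1) * n / N) = -1 := by
    intro j hj
    rw [mem_range] at hj
    exact sum_Icc_cos_two_pi_mul_div_eq_neg_one (by omega)
      (Nat.not_dvd_of_pos_of_lt (by omega) (by omega))
  rw [sum_congr rfl hterm, sum_add_distrib, ← mul_sum, sum_comm, sum_congr rfl hcos]
  simp only [sum_const, Nat.card_Icc, card_range, nsmul_eq_mul, mul_one, mul_neg]
  rw [Nat.add_sub_cancel, Nat.cast_pred (by omega)]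
  push_cast
  ring

theorem sum_sin_div_sin (N : ℕ) (hN : 2 ≤ N) (k : ℕ) (hk1 : 1 ≤ k) (hk2 : k ≤ N) :
    ∑ n ∈ Finset.Icc 1 (N - 1),
      Real.sin (π * n * (2 * k - 1) / N) / Real.sin (π * n / N) = (N : ℝ) + 1 - 2 * k :=
  sum_sin_div_sin_general N k hk1 hk2
end

section
/- The digamma derivative at 1/4 satisfies ψ'(1/4) = ∑_{n=0}^∞ 1/(n+1/4)² = π² + 8G, where G = ∑_{n=0}^∞ (-1)^n/(2n+1)² is the Catalan constant. -/
open Real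

theorem trigamma_quarter (G : ℝ)
    (hG : HasSum (fun n : ℕ => (-1 : ℝ) ^ n / (2 * n + 1) ^ 2) G) :
    HasSum (fun n : ℕ => 1 / ((n : ℝ) + 1 / 4) ^ 2) (π ^ 2 + 8 * G) := by
  set F : ℕ → ℝ := fun n => 1 / (n : ℝ) ^ 2 with hFdef
  have hF : HasSum F (π ^ 2 / 6) := hasSum_zeta_two
  -- summability of the two subsequences
  have hA : Summable (fun n : ℕ => F (4 * n + 1)) :=
    hF.summable.comp_injective (fun a b h => by omega)
  have hB : Summable (fun n : ℕ => F (4 * n + 3)) :=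
    hF.summable.comp_injective (fun a b h => by omega)
  obtain ⟨A, hAsum⟩ := hA
  obtain ⟨B, hBsum⟩ := hB
  -- odd squares sum to π²/8
  have heven : HasSum (fun n : ℕ => F (2 * n)) (π ^ 2 / 24) := by
    have h := hF.mul_left (1 / 4)
    have e : (fun n : ℕ => F (2 * n)) = fun n => 1 / 4 * F n := by
      funext n
      simp only [hFdef]
      rcases Nat.eq_zero_or_pos n with rfl | hn
      · simp
      · push_cast
        field_simp
        ring
    rw [e, show π ^ 2 / 24 = 1 / 4 * (π ^ 2 / 6) by ring]
    exact h
  have hoddS : Summable (fun n : ℕ => F (2 * n + 1)) :=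
    hF.summable.comp_injective (fun a b h => by omega)
  obtain ⟨Od, hOd⟩ := hoddS
  have htot : HasSum F (π ^ 2 / 24 + Od) := heven.even_add_odd hOd
  have hOdval : Od = π ^ 2 / 8 := by
    have := hF.unique htot; linarith
  -- split odd sum into 4n+1 and 4n+3 parts
  have h1 : HasSum (fun n : ℕ => F (2 * n + 1)) (A + B) := by
    have he : HasSum (fun n : ℕ => F (2 * (2 * n) + 1)) A := by
      have e : (fun n : ℕ => F (2 * (2 * n) + 1)) = fun n => F (4 * n + 1) := by
        funext n; congr 1; ring
      rw [e]; exact hAsum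
    have ho : HasSum (fun n : ℕ => F (2 * (2 * n + 1) + 1)) B := by
      have e : (fun n : ℕ => F (2 * (2 * n + 1) + 1)) = fun n => F (4 * n + 3) := by
        funext n; congr 1; ring
      rw [e]; exact hBsum
    exact HasSum.even_add_odd (f := fun n : ℕ => F (2 * n + 1)) he ho
  have hAB : A + B = π ^ 2 / 8 := by
    have := hOd.unique h1; linarith
  -- split Catalan sum
  have h2 : HasSum (fun n : ℕ => (-1 : ℝ) ^ n / (2 * n + 1) ^ 2) (A + -B) := by
    have he : HasSum (fun n : ℕ => (-1 : ℝ) ^ (2 * n) / (2 * (2 * n : ℕ) + 1) ^ 2) A := by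
      have e : (fun n : ℕ => (-1 : ℝ) ^ (2 * n) / (2 * (2 * n : ℕ) + 1) ^ 2)
          = fun n => F (4 * n + 1) := by
        funext n
        simp only [hFdef, pow_mul, neg_one_sq, one_pow]
        push_cast
        ring_nf
      rw [e]; exact hAsum
    have ho : HasSum (fun n : ℕ => (-1 : ℝ) ^ (2 * n + 1) / (2 * (2 * n + 1 : ℕ) + 1) ^ 2)
        (-B) := by
      have e : (fun n : ℕ => (-1 : ℝ) ^ (2 * n + 1) / (2 * (2 * n + 1 : ℕ) + 1) ^ 2)
          = fun n => -(F (4 * n + 3)) := by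
        funext n
        simp only [hFdef, pow_succ, pow_mul, neg_one_sq, one_pow]
        push_cast
        ring_nf
      rw [e]; exact hBsum.neg
    exact HasSum.even_add_odd (f := fun n : ℕ => (-1 : ℝ) ^ n / (2 * n + 1) ^ 2) he ho
  have hAmB : A - B = G := by
    have := hG.unique h2; linarith
  -- conclude
  have hAval : A = π ^ 2 / 16 + G / 2 := by linarith
  have e : (fun n : ℕ => 1 / ((n : ℝ) + 1 / 4) ^ 2) = fun n => 16 * F (4 * n + 1) := by
    funext n
    simp only [hFdef]
    push_cast
    rw [div_eq_iff (by positivity)]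
    field_simp
    ring
  rw [e, show π ^ 2 + 8 * G = 16 * A by rw [hAval]; ring]
  exact hAsum.mul_left 16
end
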